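/- arXiv:1802.02194 — 2 statements merged into one kernel-verified Lean document; each statement's English description precedes it below -/
import Mathlib

section
/- If G is a finite group and N is a normal subgroup of G of prime order, then the depth of G equals the depth of G/N plus 1. -/
/-- An unrefinable chain of length `t` for a group `G`: an ascending chain of
subgroups from `⊥` to `⊤` in which each term is maximal in the next
(equivalently, `G = G₀ > G₁ > ⋯ > G_t = 1` with each `Gᵢ` maximal in `Gᵢ₋₁`). -/
def IsUnrefinableChain {G : Type*} [Group G] {t : ℕ} (s : Fin (t + 1) → Subgroup G) : Prop :=
  s 0 = ⊥ ∧ s (Fin.last t) = ⊤ ∧ ∀ i : Fin t, s i.castSucc ⋖ s i.succ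

/-- The length `l(G)`: the maximal length of an unrefinable chain. -/
noncomputable def groupLength (G : Type*) [Group G] : ℕ :=
  sSup {t | ∃ s : Fin (t + 1) → Subgroup G, IsUnrefinableChain s}

/-- The depth `λ(G)`: the minimal length of an unrefinable chain. -/
noncomputable def groupDepth (G : Type*) [Group G] : ℕ :=
  sInf {t | ∃ s : Fin (t + 1) → Subgroup G, IsUnrefinableChain s}

/-- The chain difference `cd(G) = l(G) - λ(G)`. -/
noncomputable def chainDiff (G : Type*) [Group G] : ℕ := groupLength G - groupDepth G

/-- A chief series of length `t` for `G`. -/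
def IsChiefSeries {G : Type*} [Group G] {t : ℕ} (s : Fin (t + 1) → Subgroup G) : Prop :=
  s 0 = ⊥ ∧ s (Fin.last t) = ⊤ ∧ (∀ i, (s i).Normal) ∧
    ∀ i : Fin t, s i.castSucc < s i.succ ∧
      ∀ N : Subgroup G, N.Normal → s i.castSucc < N → N < s i.succ → False

/-- The chief length of `G`: the number of factors in a chief series. -/
noncomputable def chiefLength (G : Type*) [Group G] : ℕ :=
  sSup {t | ∃ s : Fin (t + 1) → Subgroup G, IsChiefSeries s}


/-!
Pulling a shortest unrefinable chain of `G ⧸ N` back to `G` and prepending `1 < N` gives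
`λ(G) ≤ λ(G/N) + 1`, because a subgroup of prime order is minimal. Conversely, the image in `G ⧸ N`
of a shortest unrefinable chain of `G` is a chain in which every step is either an equality or
maximal (Dedekind's law, as `N` is normal), and the step at which `N` first enters the chain
collapses; deleting the repetitions leaves an unrefinable chain of `G ⧸ N` of length at most
`λ(G) - 1`.
-/

theorem Fin.exists_not_castSucc_and_succ {n : ℕ} {P : Fin (n + 1) → Prop} (h0 : ¬P 0)
    (hlast : P (Fin.last n)) : ∃ i : Fin n, ¬P i.castSucc ∧ P i.succ := by
  by_contra! h
  exact Fin.induction (motive := fun i => ¬P i) h0 h (Fin.last n) hlast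

namespace RelSeries

theorem exists_length_add_one_eq_of_apply_eq {α : Type*} {r : SetRel α α} (p : RelSeries r)
    (i : Fin p.length) (h : p i.castSucc = p i.succ) :
    ∃ q : RelSeries r, q.head = p.head ∧ q.last = p.last ∧ q.length + 1 = p.length := by
  refine ⟨(p.take i.castSucc).smash (p.drop i.succ) (by simpa [head_drop, last_take] using h),
    by simp [head_take], by simp [last_drop], ?_⟩
  simp only [smash_length, take_length, drop_length, Fin.val_castSucc, Fin.val_succ]
  omega

theorem exists_covBy_of_wcovBy {α : Type*} [PartialOrder α]
    (q : RelSeries {(a, b) : α × α | a ⩿ b}) :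
    ∃ p : RelSeries {(a, b) : α × α | a ⋖ b},
      p.head = q.head ∧ p.last = q.last ∧ p.length ≤ q.length := by
  induction q using RelSeries.inductionOn with
  | singleton x => exact ⟨singleton _ x, rfl, rfl, le_rfl⟩
  | cons q x hx ih =>
    obtain ⟨p, hhead, hlast, hlen⟩ := ih
    rcases eq_or_ne x q.head with rfl | hne
    · exact ⟨p, hhead, by simpa using hlast, by rw [cons_length]; omega⟩
    · refine ⟨p.cons x (hhead ▸ (hx : x ⩿ q.head).covBy_of_ne hne), rfl, by simpa using hlast, ?_⟩
      simpa using hlen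

end RelSeries

namespace Subgroup

variable {G : Type*} [Group G]

theorem bot_covBy_of_prime_card {H : Subgroup G} (hH : (Nat.card H).Prime) : ⊥ ⋖ H := by
  have : Finite H := Nat.finite_of_card_ne_zero hH.ne_zero
  refine covBy_of_eq_or_eq (bot_lt_iff_ne_bot.2 ?_) fun K _ hKH => ?_
  · rintro rfl
    exact Nat.not_prime_one (card_bot (G := G) ▸ hH)
  · rcases hH.eq_one_or_self_of_dvd _ (card_dvd_of_le hKH) with h | h
    · exact .inl (eq_bot_of_card_eq _ h)
    · exact .inr (eq_of_le_of_card_ge hKH h.ge)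

theorem normal_sup_inf_assoc_of_le (N B H : Subgroup G) [N.Normal] (h : N ≤ H) :
    (N ⊔ B) ⊓ H = N ⊔ B ⊓ H := by
  apply SetLike.coe_injective
  rw [coe_inf, normal_mul, normal_mul, mul_inf_assoc N B H h]

end Subgroup

namespace QuotientGroup

open Subgroup

variable {G : Type*} [Group G] {N : Subgroup G} [N.Normal]

theorem comap_mk'_covBy {P Q : Subgroup (G ⧸ N)} (h : P ⋖ Q) :
    P.comap (mk' N) ⋖ Q.comap (mk' N) := by
  have hcorr := (apply_covBy_apply_iff (comapMk'OrderIso N)).2 h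
  refine (Set.OrdConnected.apply_covBy_apply_iff (OrderEmbedding.subtype (N ≤ ·)) ?_).2 hcorr
  rw [OrderEmbedding.coe_subtype, Subtype.range_coe_subtype]
  exact Set.ordConnected_Ici

theorem map_mk'_eq_map_mk'_iff {A B : Subgroup G} :
    A.map (mk' N) = B.map (mk' N) ↔ N ⊔ A = N ⊔ B := by
  rw [← comap_map_mk', ← comap_map_mk' N B, (comap_injective (mk'_surjective N)).eq_iff]

theorem map_mk'_wcovBy {A B : Subgroup G} (h : A ⋖ B) : A.map (mk' N) ⩿ B.map (mk' N) := by
  refine ⟨map_mono h.le, fun Q hAQ hQB => ?_⟩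
  set H := Q.comap (mk' N)
  have hNH : N ≤ H := le_comap_mk' N Q
  have hAH : N ⊔ A < H := by
    rw [← comap_map_mk']
    exact (comap_lt_comap_of_surjective (mk'_surjective N)).2 hAQ
  have hHB : H < N ⊔ B := by
    rw [← comap_map_mk']
    exact (comap_lt_comap_of_surjective (mk'_surjective N)).2 hQB
  rcases h.eq_or_eq (le_inf (le_sup_right.trans hAH.le) h.le) inf_le_right with hA | hB
  · refine hAH.ne ?_
    rw [← hA, inf_comm, ← normal_sup_inf_assoc_of_le N B H hNH, inf_eq_right.2 hHB.le]
  · exact hHB.not_ge (sup_le hNH (hB ▸ inf_le_left))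

theorem map_mk'_eq_of_covBy {A B : Subgroup G} (h : A ⋖ B) (hA : ¬N ≤ A) (hB : N ≤ B) :
    A.map (mk' N) = B.map (mk' N) := by
  rw [map_mk'_eq_map_mk'_iff, sup_eq_right.2 hB]
  exact (h.eq_or_eq le_sup_right (sup_le hB h.le)).resolve_left fun h' => hA (h' ▸ le_sup_left)

end QuotientGroup

theorem groupDepth_le_length {G : Type*} [Group G]
    (p : RelSeries {(a, b) : Subgroup G × Subgroup G | a ⋖ b}) (hhead : p.head = ⊥)
    (hlast : p.last = ⊤) : groupDepth G ≤ p.length :=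
  Nat.sInf_le ⟨p.toFun, hhead, hlast, p.step⟩

theorem exists_relSeries_length_eq_groupDepth (G : Type*) [Group G] [Finite G] :
    ∃ p : RelSeries {(a, b) : Subgroup G × Subgroup G | a ⋖ b},
      p.head = ⊥ ∧ p.last = ⊤ ∧ p.length = groupDepth G := by
  obtain ⟨p, -, -, hhead, hlast⟩ := LTSeries.exists_relSeries_covBy_and_head_eq_bot_and_last_eq_bot
    (RelSeries.singleton _ (⊥ : Subgroup G))
  have hmem : groupDepth G ∈ {t | ∃ s : Fin (t + 1) → Subgroup G, IsUnrefinableChain s} :=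
    Nat.sInf_mem ⟨p.length, p.toFun, hhead, hlast, p.step⟩
  obtain ⟨s, hs0, hslast, hs⟩ := hmem
  exact ⟨⟨_, s, hs⟩, hs0, hslast, rfl⟩

section Quotient

open Subgroup QuotientGroup

variable {G : Type*} [Group G] {N : Subgroup G} [N.Normal]

theorem groupDepth_le_groupDepth_quotient_add_one [Finite (G ⧸ N)] (hN : ⊥ ⋖ N) :
    groupDepth G ≤ groupDepth (G ⧸ N) + 1 := by
  obtain ⟨q, hhead, hlast, hlen⟩ := exists_relSeries_length_eq_groupDepth (G ⧸ N)
  let r := q.map (s := {(a, b) : Subgroup G × Subgroup G | a ⋖ b})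
    ⟨fun P => P.comap (mk' N), fun h => comap_mk'_covBy h⟩
  have hr : ⊥ ⋖ r.head := by simpa [r, hhead] using hN
  calc groupDepth G ≤ (r.cons ⊥ hr).length := groupDepth_le_length _ rfl (by simp [r, hlast])
    _ = groupDepth (G ⧸ N) + 1 := by simp [r, hlen]

theorem groupDepth_quotient_add_one_le [Finite G] (hN : N ≠ ⊥) :
    groupDepth (G ⧸ N) + 1 ≤ groupDepth G := by
  obtain ⟨p, hhead, hlast, hlen⟩ := exists_relSeries_length_eq_groupDepth G
  obtain ⟨i, hi⟩ := Fin.exists_not_castSucc_and_succ (P := fun i => N ≤ p i)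
    (by simpa [RelSeries.apply_zero, hhead] using hN) (by simp [RelSeries.apply_last, hlast])
  let q := p.map (s := {(a, b) : Subgroup (G ⧸ N) × Subgroup (G ⧸ N) | a ⩿ b})
    ⟨fun A => A.map (mk' N), fun h => map_mk'_wcovBy h⟩
  obtain ⟨q', hhead', hlast', hlen'⟩ :=
    q.exists_length_add_one_eq_of_apply_eq i (map_mk'_eq_of_covBy (p.step i) hi.1 hi.2)
  obtain ⟨w, hwhead, hwlast, hwlen⟩ := q'.exists_covBy_of_wcovBy
  have hw := groupDepth_le_length w (by simp [hwhead, hhead', q, hhead])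
    (by simp [hwlast, hlast', q, hlast, map_top_of_surjective _ (mk'_surjective N)])
  simp only [q, RelSeries.map_length] at hlen'
  omega

end Quotient

/-- if `N ⊴ G` has prime order then `λ(G) = λ(G/N) + 1`. -/
theorem depth_eq_depth_quotient_add_one (G : Type*) [Group G] [Finite G]
    (N : Subgroup G) [N.Normal] (hN : (Nat.card N).Prime) :
    groupDepth G = groupDepth (G ⧸ N) + 1 :=
  have hNcov : ⊥ ⋖ N := Subgroup.bot_covBy_of_prime_card hN
  le_antisymm (groupDepth_le_groupDepth_quotient_add_one hNcov)
    (groupDepth_quotient_add_one_le hNcov.lt.ne')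
end

section
/- Let G be a finite group with a chain of subgroups 1 = G_m ◁ G_{m−1} ◁ ... ◁ G_1 ◁ G_0 = G, where each G_i is normal in G_{i−1}. Then cd(G) ≥ Σ_i cd(G_{i−1}/G_i). In particular, if T_1, ..., T_m are the composition factors of G listed with multiplicity, then cd(G) ≥ Σ_i cd(T_i). -/
/-!
Let `N` be a normal subgroup of `G`. Pushing an unrefinable chain of `N` into `G` and following it
by the preimage of an unrefinable chain of `G ⧸ N` gives an unrefinable chain of `G`, since by the
correspondence theorem the subgroup lattices of `N` and `G ⧸ N` are the intervals below and above
`N`. Hence `l(N) + l(G/N) ≤ l(G)` and `λ(G) ≤ λ(N) + λ(G/N)`, so `cd(N) + cd(G/N) ≤ cd(G)`.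
Induction along the series gives the theorem, `cd` being invariant under isomorphisms of
subgroup lattices.
-/

open Subgroup

def chainLengths (G : Type*) [Group G] : Set ℕ :=
  {t | ∃ s : Fin (t + 1) → Subgroup G, IsUnrefinableChain s}

theorem Set.OrdConnected.coe_covBy_coe {α : Type*} [Preorder α] {p : α → Prop}
    (hp : {a | p a}.OrdConnected) {a b : Subtype p} : (a : α) ⋖ b ↔ a ⋖ b :=
  Set.OrdConnected.apply_covBy_apply_iff (OrderEmbedding.subtype p)
    (by rwa [OrderEmbedding.coe_subtype, Subtype.range_coe_subtype])

section

variable {G H : Type*} [Group G] [Group H]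

theorem covBy_map_subtype {N : Subgroup G} {x y : Subgroup N} (h : x ⋖ y) :
    x.map N.subtype ⋖ y.map N.subtype :=
  (Set.ordConnected_Iic.coe_covBy_coe (a := MapSubtype.orderIso N x)).2
    ((apply_covBy_apply_iff _).2 h)

theorem covBy_comap_mk' (N : Subgroup G) [N.Normal] {x y : Subgroup (G ⧸ N)} (h : x ⋖ y) :
    x.comap (QuotientGroup.mk' N) ⋖ y.comap (QuotientGroup.mk' N) :=
  (Set.ordConnected_Ici.coe_covBy_coe (a := QuotientGroup.comapMk'OrderIso N x)).2
    ((apply_covBy_apply_iff _).2 h)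

theorem mem_chainLengths_iff {t : ℕ} : t ∈ chainLengths G ↔
    ∃ p : RelSeries {(a, b) : Subgroup G × Subgroup G | a ⋖ b},
      p.length = t ∧ p.head = ⊥ ∧ p.last = ⊤ := by
  constructor
  · rintro ⟨s, h0, hlast, hcov⟩
    exact ⟨⟨t, s, hcov⟩, rfl, h0, hlast⟩
  · rintro ⟨p, rfl, h0, hlast⟩
    exact ⟨p, h0, hlast, p.step⟩

theorem mem_chainLengths_of_orderIso (e : Subgroup G ≃o Subgroup H) {t : ℕ}
    (ht : t ∈ chainLengths G) : t ∈ chainLengths H := by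
  obtain ⟨s, h0, hlast, hcov⟩ := ht
  exact ⟨e ∘ s, by simp [h0], by simp [hlast], fun i => (apply_covBy_apply_iff e).2 (hcov i)⟩

theorem chainDiff_eq_of_orderIso (e : Subgroup G ≃o Subgroup H) : chainDiff G = chainDiff H := by
  have : chainLengths G = chainLengths H :=
    (Set.Subset.antisymm (fun _ => mem_chainLengths_of_orderIso e)
      (fun _ => mem_chainLengths_of_orderIso e.symm))
  change sSup (chainLengths G) - sInf (chainLengths G) = _
  rw [this]
  rfl

theorem add_mem_chainLengths (N : Subgroup G) [N.Normal] {a b : ℕ}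
    (ha : a ∈ chainLengths N) (hb : b ∈ chainLengths (G ⧸ N)) : a + b ∈ chainLengths G := by
  obtain ⟨p, rfl, hp0, hplast⟩ := mem_chainLengths_iff.1 ha
  obtain ⟨q, rfl, hq0, hqlast⟩ := mem_chainLengths_iff.1 hb
  let p' : RelSeries {(a, b) : Subgroup G × Subgroup G | a ⋖ b} :=
    ⟨p.length, fun i => (p i).map N.subtype, fun i => covBy_map_subtype (p.step i)⟩
  let q' : RelSeries {(a, b) : Subgroup G × Subgroup G | a ⋖ b} :=
    ⟨q.length, fun i => (q i).comap (QuotientGroup.mk' N), fun i => covBy_comap_mk' N (q.step i)⟩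
  have hjoin : p'.last = q'.head := by
    change p.last.map N.subtype = q.head.comap (QuotientGroup.mk' N)
    rw [hplast, hq0, ← MonoidHom.range_eq_map, range_subtype, MonoidHom.comap_bot,
      QuotientGroup.ker_mk']
  refine mem_chainLengths_iff.2 ⟨p'.smash q' hjoin, rfl, ?_, ?_⟩
  · rw [RelSeries.head_smash]
    exact (congrArg _ hp0).trans (Subgroup.map_bot _)
  · rw [RelSeries.last_smash]
    exact (congrArg _ hqlast).trans (Subgroup.comap_top _)

end

section Finite

variable {G : Type*} [Group G] [Finite G]

theorem chainLengths_nonempty : (chainLengths G).Nonempty := by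
  obtain ⟨a, h0, n, hn, hcov⟩ := exists_covBy_seq_of_wellFoundedLT_wellFoundedGT (Subgroup G)
  exact ⟨n, fun i => a i, h0.eq_bot, hn.eq_top, fun i => hcov i i.isLt⟩

theorem bddAbove_chainLengths : BddAbove (chainLengths G) := by
  refine ⟨Nat.card (Subgroup G), fun t ⟨s, _, _, hcov⟩ => ?_⟩
  have hs : StrictMono s := Fin.strictMono_iff_lt_succ.2 fun i => (hcov i).lt
  exact le_of_lt (by simpa using Nat.card_le_card_of_injective s hs.injective)

theorem groupLength_mem_chainLengths : groupLength G ∈ chainLengths G :=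
  Nat.sSup_mem chainLengths_nonempty bddAbove_chainLengths

theorem groupDepth_mem_chainLengths : groupDepth G ∈ chainLengths G :=
  Nat.sInf_mem chainLengths_nonempty

theorem groupDepth_le_groupLength : groupDepth G ≤ groupLength G :=
  Nat.sInf_le groupLength_mem_chainLengths

theorem chainDiff_add_chainDiff_quotient_le (N : Subgroup G) [N.Normal] :
    chainDiff N + chainDiff (G ⧸ N) ≤ chainDiff G := by
  have hlength : groupLength N + groupLength (G ⧸ N) ≤ groupLength G :=
    le_csSup bddAbove_chainLengths
      (add_mem_chainLengths N groupLength_mem_chainLengths groupLength_mem_chainLengths)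
  have hdepth : groupDepth G ≤ groupDepth N + groupDepth (G ⧸ N) :=
    Nat.sInf_le (add_mem_chainLengths N groupDepth_mem_chainLengths groupDepth_mem_chainLengths)
  have hN : groupDepth N ≤ groupLength N := groupDepth_le_groupLength
  have hQ : groupDepth (G ⧸ N) ≤ groupLength (G ⧸ N) := groupDepth_le_groupLength
  unfold chainDiff
  omega

theorem sum_chainDiff_quotient_le (m : ℕ) (s : Fin (m + 1) → Subgroup G)
    (hlast : s (Fin.last m) = ⊥) (hle : ∀ i : Fin m, s i.succ ≤ s i.castSucc)
    (hnorm : ∀ i : Fin m, ((s i.succ).subgroupOf (s i.castSucc)).Normal) :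
    ∑ i : Fin m, chainDiff ((s i.castSucc) ⧸ (s i.succ).subgroupOf (s i.castSucc)) ≤
      chainDiff (s 0) := by
  induction m with
  | zero => simp
  | succ m ih =>
    have htail := ih (fun i => s i.succ) (by rw [← hlast, Fin.succ_last])
      (fun i => hle i.succ) (fun i => hnorm i.succ)
    have hhead := @chainDiff_add_chainDiff_quotient_le _ _ _ _ (hnorm 0)
    rw [chainDiff_eq_of_orderIso (subgroupOfEquivOfLe (hle 0)).mapSubgroup] at hhead
    rw [Fin.sum_univ_succ]
    calc _ ≤ _ + chainDiff (s 1) := add_le_add_right htail _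
      _ ≤ chainDiff (s 0) := (add_comm _ _).le.trans hhead

end Finite

/-- for a chain `1 = G_m ◁ G_{m-1} ◁ ⋯ ◁ G_0 = G` with each term
normal in the preceding, `cd(G) ≥ Σᵢ cd(G_{i-1}/G_i)`. -/
theorem chainDiff_ge_sum_of_subnormal_series (G : Type*) [Group G] [Finite G]
    (m : ℕ) (s : Fin (m + 1) → Subgroup G)
    (h0 : s 0 = ⊤) (hlast : s (Fin.last m) = ⊥)
    (hle : ∀ i : Fin m, s i.succ ≤ s i.castSucc)
    (hnorm : ∀ i : Fin m, ((s i.succ).subgroupOf (s i.castSucc)).Normal) :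
    ∑ i : Fin m,
        chainDiff ((s i.castSucc) ⧸ (s i.succ).subgroupOf (s i.castSucc)) ≤
      chainDiff G := by
  have h := sum_chainDiff_quotient_le m s hlast hle hnorm
  rwa [h0, chainDiff_eq_of_orderIso Subgroup.topEquiv.mapSubgroup] at h
end
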